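/- Let r₁ ≥ 2 and r₂ ≥ 1, and let H be the complete split graph obtained as the join of the complete graph K_{r₂} with the empty graph (coclique) on r₁ vertices. Then the characteristic polynomial of the eccentricity matrix ε(H) equals (x+2)^{r₁−1}·(x+1)^{r₂−1}·(x² − (2r₁ + r₂ − 3)x + r₁r₂ − 2r₁ − 2r₂ + 2). -/

import Mathlib

open Finset Polynomial

noncomputable def ecc {V : Type*} [Fintype V] (G : SimpleGraph V) (u : V) : ℕ :=
  Finset.univ.sup (G.dist u)

noncomputable def eccMatrix {V : Type*} [Fintype V] (G : SimpleGraph V) :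
    Matrix V V ℝ := fun u v =>
  if G.dist u v = min (ecc G u) (ecc G v) then (G.dist u v : ℝ) else 0

theorem eccMatrix_isHermitian {V : Type*} [Fintype V] (G : SimpleGraph V) :
    (eccMatrix G).IsHermitian := by
  unfold Matrix.IsHermitian
  ext u v
  simp only [Matrix.conjTranspose_apply, eccMatrix, star_trivial]
  rw [SimpleGraph.dist_comm, min_comm]

/-- Number of positive eigenvalues (with multiplicity) of a real symmetric matrix. -/
noncomputable def posEigCount {V : Type*} [Fintype V] [DecidableEq V]
    {A : Matrix V V ℝ} (hA : A.IsHermitian) : ℕ :=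
  (Finset.univ.filter fun i => 0 < hA.eigenvalues i).card

/-- The join of two simple graphs: disjoint union plus all edges in between. -/
def graphJoin {α β : Type*} (G : SimpleGraph α) (H : SimpleGraph β) :
    SimpleGraph (α ⊕ β) where
  Adj x y := match x, y with
    | Sum.inl a, Sum.inl b => G.Adj a b
    | Sum.inr a, Sum.inr b => H.Adj a b
    | _, _ => True
  symm := ⟨by rintro (a|a) (b|b) h <;> first | exact G.symm.symm _ _ h | exact H.symm.symm _ _ h | trivial⟩
  loopless := ⟨by rintro (a|a) h <;> first | exact G.loopless.irrefl _ h | exact H.loopless.irrefl _ h⟩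

/-- The disjoint union of two simple graphs. -/
def graphSum {α β : Type*} (G : SimpleGraph α) (H : SimpleGraph β) :
    SimpleGraph (α ⊕ β) where
  Adj x y := match x, y with
    | Sum.inl a, Sum.inl b => G.Adj a b
    | Sum.inr a, Sum.inr b => H.Adj a b
    | _, _ => False
  symm := ⟨by rintro (a|a) (b|b) h <;> first | exact G.symm.symm _ _ h | exact H.symm.symm _ _ h | trivial⟩
  loopless := ⟨by rintro (a|a) h <;> first | exact G.loopless.irrefl _ h | exact H.loopless.irrefl _ h⟩

/-- Disjoint union of blocks indexed by `ι`; block `i` has `r i` vertices and is a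
clique when `P i` holds and a coclique (independent set) otherwise. -/
def blocksGraph {ι : Type*} (r : ι → ℕ) (P : ι → Prop) :
    SimpleGraph (Σ i, Fin (r i)) where
  Adj x y := x ≠ y ∧ x.1 = y.1 ∧ P x.1
  symm := ⟨by rintro x y ⟨h1, h2, h3⟩; exact ⟨h1.symm, h2.symm, h2 ▸ h3⟩⟩
  loopless := ⟨fun x h => h.1 rfl⟩

/-!
The eccentricities are `1` on the clique and `2` on the coclique, so `ε(H) = F Fᵀ - D` where `F` has
rows `(1, 0)` on the clique and `(1, 1)` on the coclique, and `D` is `1` on the clique and `2` on the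
coclique. Thus `x I - ε(H) = (x I + D) - F Fᵀ` is a rank-two perturbation of a diagonal matrix, and the
matrix determinant lemma turns its determinant into `(x + 1) ^ r₂ (x + 2) ^ r₁` times a `2 × 2`
determinant. This identifies the characteristic polynomial at every `x ∉ {-1, -2}`, hence everywhere.
-/

open Matrix SimpleGraph

theorem Matrix.det_diagonal_add_mul {n m K : Type*} [Fintype n] [DecidableEq n] [Fintype m]
    [DecidableEq m] [Field K] {d : n → K} (hd : ∀ i, d i ≠ 0) (U : Matrix n m K)
    (V : Matrix m n K) :
    (diagonal d + U * V).det = (∏ i, d i) * (1 + V * diagonal d⁻¹ * U).det := by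
  have hdet : IsUnit (diagonal d).det := by
    rw [det_diagonal]
    exact isUnit_iff_ne_zero.2 (Finset.prod_ne_zero_iff.2 fun i _ => hd i)
  have hinv : (diagonal d)⁻¹ = diagonal d⁻¹ := inv_eq_right_inv <| by
    rw [diagonal_mul_diagonal, ← diagonal_one]
    exact congrArg diagonal (funext fun i => mul_inv_cancel₀ (hd i))
  rw [det_add_mul U V hdet, det_diagonal, hinv]

lemma ecc_eq_of_dist_le {V : Type*} [Fintype V] (G : SimpleGraph V) (u : V) {n : ℕ}
    (hle : ∀ v, G.dist u v ≤ n) (hex : ∃ v, G.dist u v = n) : ecc G u = n := by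
  obtain ⟨v, rfl⟩ := hex
  exact le_antisymm (Finset.sup_le fun w _ => hle w) (Finset.le_sup (Finset.mem_univ v))

section GraphJoin

variable {α β : Type*} (G : SimpleGraph α) (H : SimpleGraph β)

lemma graphJoin_dist_inl_inr (a : α) (b : β) : (graphJoin G H).dist (.inl a) (.inr b) = 1 :=
  dist_eq_one_iff_adj.2 trivial

lemma graphJoin_dist_inr_inl (b : β) (a : α) : (graphJoin G H).dist (.inr b) (.inl a) = 1 :=
  dist_eq_one_iff_adj.2 trivial

lemma graphJoin_dist_inl_inl_of_adj {a a' : α} (h : G.Adj a a') :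
    (graphJoin G H).dist (.inl a) (.inl a') = 1 :=
  dist_eq_one_iff_adj.2 h

lemma graphJoin_dist_inr_inr_of_not_adj [Nonempty α] {b b' : β} (hne : b ≠ b')
    (h : ¬ H.Adj b b') : (graphJoin G H).dist (.inr b) (.inr b') = 2 := by
  obtain ⟨a⟩ := ‹Nonempty α›
  have hcommon : Sum.inl a ∈ (graphJoin G H).commonNeighbors (.inr b) (.inr b') :=
    (mem_commonNeighbors _).2 ⟨trivial, trivial⟩
  have : (graphJoin G H).edist (.inr b) (.inr b') = 2 :=
    edist_eq_two_iff.2 ⟨by simpa using hne, h, _, hcommon⟩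
  simp [SimpleGraph.dist, this]

end GraphJoin

section CompleteSplitGraph

variable {r₁ r₂ : ℕ}

/-- `CS(r₁ + r₂, r₁)`, with the clique `K_{r₂}` on the left and the coclique on the right. -/
abbrev completeSplitGraph (r₁ r₂ : ℕ) : SimpleGraph (Fin r₂ ⊕ Fin r₁) :=
  graphJoin ⊤ ⊥

lemma completeSplitGraph_dist_inl_inl (a a' : Fin r₂) :
    (completeSplitGraph r₁ r₂).dist (.inl a) (.inl a') = if a = a' then 0 else 1 := by
  split_ifs with h
  · simp [h]
  · exact graphJoin_dist_inl_inl_of_adj _ _ h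

lemma completeSplitGraph_dist_inr_inr (h₂ : 0 < r₂) (b b' : Fin r₁) :
    (completeSplitGraph r₁ r₂).dist (.inr b) (.inr b') = if b = b' then 0 else 2 := by
  have : Nonempty (Fin r₂) := ⟨⟨0, h₂⟩⟩
  split_ifs with h
  · simp [h]
  · exact graphJoin_dist_inr_inr_of_not_adj _ _ h id

lemma ecc_completeSplitGraph_inl (h₁ : 0 < r₁) (a : Fin r₂) :
    ecc (completeSplitGraph r₁ r₂) (.inl a) = 1 := by
  refine ecc_eq_of_dist_le _ _ ?_ ⟨.inr ⟨0, h₁⟩, graphJoin_dist_inl_inr _ _ _ _⟩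
  rintro (a' | b)
  · rw [completeSplitGraph_dist_inl_inl]
    split_ifs <;> simp
  · exact (graphJoin_dist_inl_inr _ _ _ _).le

lemma ecc_completeSplitGraph_inr (h₁ : 1 < r₁) (h₂ : 0 < r₂) (b : Fin r₁) :
    ecc (completeSplitGraph r₁ r₂) (.inr b) = 2 := by
  obtain ⟨b', hb'⟩ := Fintype.exists_ne_of_one_lt_card (by simpa using h₁) b
  refine ecc_eq_of_dist_le _ _ ?_
    ⟨.inr b', by simp [completeSplitGraph_dist_inr_inr h₂, hb'.symm]⟩
  rintro (a | b')
  · simp [graphJoin_dist_inr_inl]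
  · rw [completeSplitGraph_dist_inr_inr h₂]
    split_ifs <;> simp

def splitFrame (r₁ r₂ : ℕ) : Matrix (Fin r₂ ⊕ Fin r₁) (Fin 2) ℝ :=
  of (Sum.elim (fun _ => ![1, 0]) (fun _ => ![1, 1]))

lemma eccMatrix_completeSplitGraph (h₁ : 1 < r₁) (h₂ : 0 < r₂) :
    eccMatrix (completeSplitGraph r₁ r₂) =
      splitFrame r₁ r₂ * (splitFrame r₁ r₂)ᵀ - diagonal (Sum.elim 1 2) := by
  have ecc_inl : ∀ a, ecc (completeSplitGraph r₁ r₂) (.inl a) = 1 :=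
    ecc_completeSplitGraph_inl (by omega)
  have ecc_inr := ecc_completeSplitGraph_inr h₁ h₂
  ext (a | b) (a' | b')
  · rcases eq_or_ne a a' with rfl | h
    · simp [eccMatrix, splitFrame, ecc_inl, mul_apply]
    · simp [eccMatrix, splitFrame, completeSplitGraph_dist_inl_inl, ecc_inl, mul_apply, h]
  · simp [eccMatrix, splitFrame, graphJoin_dist_inl_inr, ecc_inl, ecc_inr, mul_apply]
  · simp [eccMatrix, splitFrame, graphJoin_dist_inr_inl, ecc_inl, ecc_inr, mul_apply]
  · rcases eq_or_ne b b' with rfl | h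
    · norm_num [eccMatrix, splitFrame, completeSplitGraph_dist_inr_inr h₂, ecc_inr, mul_apply]
    · norm_num [eccMatrix, splitFrame, completeSplitGraph_dist_inr_inr h₂, ecc_inr, mul_apply, h]

lemma charpoly_splitFrame_mul_transpose_sub_diagonal (h₁ : 0 < r₁) (h₂ : 0 < r₂) :
    (splitFrame r₁ r₂ * (splitFrame r₁ r₂)ᵀ - diagonal (Sum.elim 1 2)).charpoly =
      (X + C 2) ^ (r₁ - 1) * (X + C 1) ^ (r₂ - 1) *
        (X ^ 2 - C (2 * (r₁ : ℝ) + (r₂ : ℝ) - 3) * X +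
          C ((r₁ : ℝ) * (r₂ : ℝ) - 2 * (r₁ : ℝ) - 2 * (r₂ : ℝ) + 2)) := by
  refine eq_of_infinite_eval_eq _ _ ((Set.toFinite {-1, -2}).infinite_compl.mono ?_)
  intro t ht
  simp only [Set.mem_compl_iff, Set.mem_insert_iff, Set.mem_singleton_iff, not_or] at ht
  have ht₁ : t + 1 ≠ 0 := fun h => ht.1 (by linarith)
  have ht₂ : t + 2 ≠ 0 := fun h => ht.2 (by linarith)
  set d : Fin r₂ ⊕ Fin r₁ → ℝ := Sum.elim (fun _ => t + 1) (fun _ => t + 2)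
  have hsplit : scalar _ t - (splitFrame r₁ r₂ * (splitFrame r₁ r₂)ᵀ - diagonal (Sum.elim 1 2)) =
      diagonal d + splitFrame r₁ r₂ * -(splitFrame r₁ r₂)ᵀ := by
    ext (a | b) (a' | b') <;> simp [d, splitFrame, mul_apply, diagonal_apply] <;> split_ifs <;> ring
  have hgram : 1 - (splitFrame r₁ r₂)ᵀ * diagonal d⁻¹ * splitFrame r₁ r₂ =
      !![1 - r₂ / (t + 1) - r₁ / (t + 2), -(r₁ / (t + 2)); -(r₁ / (t + 2)), 1 - r₁ / (t + 2)] := by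
    ext i j
    fin_cases i <;> fin_cases j <;>
      simp [d, splitFrame, mul_apply, diagonal_apply, Fintype.sum_sum_type, div_eq_mul_inv, sub_sub]
  rw [Set.mem_ofPred_eq, eval_charpoly, hsplit,
    det_diagonal_add_mul (by rintro (_ | _) <;> simpa [d]), Matrix.neg_mul, Matrix.neg_mul,
    ← sub_eq_add_neg, hgram, det_fin_two_of, Fintype.prod_sum_type]
  simp only [d, Sum.elim_inl, Sum.elim_inr, prod_const, card_univ, Fintype.card_fin, eval_mul,
    eval_pow, eval_add, eval_sub, eval_X, eval_C]
  obtain ⟨a, rfl⟩ : ∃ a, r₁ = a + 1 := ⟨r₁ - 1, by omega⟩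
  obtain ⟨b, rfl⟩ : ∃ b, r₂ = b + 1 := ⟨r₂ - 1, by omega⟩
  simp only [Nat.add_sub_cancel, pow_succ]
  field_simp
  ring

end CompleteSplitGraph

/-- the characteristic polynomial of the eccentricity matrix of the complete
split graph (join of `K_{r₂}` with a coclique of size `r₁`). -/
theorem stmt7 (r₁ r₂ : ℕ) (h1 : 2 ≤ r₁) (h2 : 1 ≤ r₂) :
    (eccMatrix (graphJoin (⊤ : SimpleGraph (Fin r₂)) (⊥ : SimpleGraph (Fin r₁)))).charpoly =
      (X + C 2) ^ (r₁ - 1) * (X + C 1) ^ (r₂ - 1) *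
        (X ^ 2 - C (2 * (r₁ : ℝ) + (r₂ : ℝ) - 3) * X +
          C ((r₁ : ℝ) * (r₂ : ℝ) - 2 * (r₁ : ℝ) - 2 * (r₂ : ℝ) + 2)) := by
  rw [eccMatrix_completeSplitGraph h1 h2,
    charpoly_splitFrame_mul_transpose_sub_diagonal (by omega) h2]
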